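/- Let p, q be functions on the naturals with p(x), q(x) ≥ 10x for x ≥ 1, define ε(x) = 2^{-q(x)} and f(x) = 10·ln(2)·2^{2q(x)}·p(x). Then for all sufficiently large x: 10 · f(x)² · 2^{p(x)} · x · (1 - ε(x))^{f(x)} < 1. -/

import Mathlib

/-!
Since `1 - ε ≤ exp (-ε)`, the factor `(1 - ε)^f` is at most `exp (-ε f)`, and with `ε = 2^{-q}`,
`f = 10 · ln 2 · 4^q · p` this is exactly `2^{-10 · 2^q · p}`. The remaining factor
`10 f² 2^p x` is at most `2^{10 + 4q + 4p}` (using `10 ln 2 ≤ 8` and `x ≤ p < 2^p`), and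
`10 + 4q + 4p < 10 · 2^q · p` as soon as `p, q ≥ 1`.
-/

open Real

lemma Real.one_sub_rpow_le_exp_neg_mul {y t : ℝ} (hy : y ≤ 1) (ht : 0 ≤ t) :
    (1 - y) ^ t ≤ exp (-(y * t)) := by
  rw [← neg_mul, exp_mul]
  exact rpow_le_rpow (by linarith) (one_sub_le_exp_neg y) ht

lemma one_sub_two_rpow_neg_rpow_le (P Q : ℕ) :
    (1 - (2 : ℝ) ^ (-(Q : ℝ))) ^ (10 * log 2 * (2 : ℝ) ^ (2 * Q) * P)
      ≤ ((2 : ℝ) ^ (10 * 2 ^ Q * P))⁻¹ := by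
  have hε : (2 : ℝ) ^ (-(Q : ℝ)) = ((2 : ℝ) ^ Q)⁻¹ := by
    rw [rpow_neg zero_le_two, rpow_natCast]
  have hε_le : (2 : ℝ) ^ (-(Q : ℝ)) ≤ 1 := by
    rw [hε]
    exact inv_le_one_of_one_le₀ (one_le_pow₀ one_le_two)
  have hεf : (2 : ℝ) ^ (-(Q : ℝ)) * (10 * log 2 * (2 : ℝ) ^ (2 * Q) * P)
      = (10 * 2 ^ Q * P : ℕ) * log 2 := by
    rw [hε, two_mul, pow_add]
    push_cast
    field_simp
  calc _ ≤ exp (-((10 * 2 ^ Q * P : ℕ) * log 2)) := by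
        rw [← hεf]
        exact one_sub_rpow_le_exp_neg_mul hε_le (by positivity)
    _ = _ := by rw [exp_neg, exp_nat_mul, exp_log two_pos]

lemma add_lt_ten_mul_two_pow_mul {P Q : ℕ} (hP : 1 ≤ P) (hQ : 1 ≤ Q) :
    10 + 4 * Q + 4 * P < 10 * 2 ^ Q * P := by
  have := Nat.lt_two_pow_self (n := Q)
  nlinarith

lemma mul_sq_mul_two_pow_mul_lt_two_pow {P Q x : ℕ} (hP : 1 ≤ P) (hQ : 1 ≤ Q) (hx : x ≤ P) :
    640 * 2 ^ (4 * Q) * P ^ 2 * 2 ^ P * x < 2 ^ (10 * 2 ^ Q * P) := by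
  have hP_lt : P < 2 ^ P := Nat.lt_two_pow_self
  have hP_sq : P ^ 2 ≤ 2 ^ (2 * P) := by
    rw [mul_comm, pow_mul]
    exact Nat.pow_le_pow_left hP_lt.le 2
  calc 640 * 2 ^ (4 * Q) * P ^ 2 * 2 ^ P * x
      ≤ 2 ^ 10 * 2 ^ (4 * Q) * 2 ^ (2 * P) * 2 ^ P * 2 ^ P := by
        gcongr
        · norm_num
        · omega
    _ = 2 ^ (10 + 4 * Q + 4 * P) := by ring
    _ < 2 ^ (10 * 2 ^ Q * P) := Nat.pow_lt_pow_right one_lt_two (add_lt_ten_mul_two_pow_mul hP hQ)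

lemma ten_mul_sq_mul_two_pow_mul_lt_two_pow {P Q x : ℕ} (hP : 1 ≤ P) (hQ : 1 ≤ Q) (hx : x ≤ P) :
    10 * (10 * log 2 * (2 : ℝ) ^ (2 * Q) * P) ^ 2 * 2 ^ P * x < (2 : ℝ) ^ (10 * 2 ^ Q * P) := by
  have hlog : 10 * log 2 ≤ 8 := by linarith [log_two_lt_d9]
  calc 10 * (10 * log 2 * (2 : ℝ) ^ (2 * Q) * P) ^ 2 * 2 ^ P * x
      ≤ 10 * (8 * (2 : ℝ) ^ (2 * Q) * P) ^ 2 * 2 ^ P * x := by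
        gcongr
    _ = ((640 * 2 ^ (4 * Q) * P ^ 2 * 2 ^ P * x : ℕ) : ℝ) := by push_cast; ring
    _ < ((2 ^ (10 * 2 ^ Q * P) : ℕ) : ℝ) := by
        exact_mod_cast mul_sq_mul_two_pow_mul_lt_two_pow hP hQ hx
    _ = _ := by push_cast; rfl

/-- Quantitative claim for the exponential model-size bound for FO³₋: with `p, q ≥ 10x`,
`ε x = 2^{-q(x)}` and `f x = 10 · ln 2 · 2^{2q(x)} · p(x)`, for all sufficiently large `x`,
`10 · f(x)² · 2^{p(x)} · x · (1-ε(x))^{f(x)} < 1`. -/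
theorem fo3_model_size_bound (p q : ℕ → ℕ)
    (hp : ∀ x : ℕ, 1 ≤ x → 10 * x ≤ p x) (hq : ∀ x : ℕ, 1 ≤ x → 10 * x ≤ q x)
    (ε f : ℕ → ℝ)
    (hε : ∀ x : ℕ, ε x = (2 : ℝ) ^ (-(q x : ℝ)))
    (hf : ∀ x : ℕ, f x = 10 * Real.log 2 * (2 : ℝ) ^ (2 * q x) * (p x : ℝ)) :
    ∃ N : ℕ, ∀ x : ℕ, N ≤ x →
      10 * (f x) ^ 2 * (2 : ℝ) ^ (p x) * (x : ℝ) * (1 - ε x) ^ (f x) < 1 := by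
  refine ⟨1, fun x hx => ?_⟩
  have hP : 1 ≤ p x := by linarith [hp x hx]
  have hQ : 1 ≤ q x := by linarith [hq x hx]
  have hxP : x ≤ p x := by linarith [hp x hx]
  rw [hε, hf]
  calc _ ≤ 10 * (10 * log 2 * (2 : ℝ) ^ (2 * q x) * p x) ^ 2 * 2 ^ p x * x
          * ((2 : ℝ) ^ (10 * 2 ^ q x * p x))⁻¹ :=
        mul_le_mul_of_nonneg_left (one_sub_two_rpow_neg_rpow_le _ _) (by positivity)
    _ < (2 : ℝ) ^ (10 * 2 ^ q x * p x) * ((2 : ℝ) ^ (10 * 2 ^ q x * p x))⁻¹ :=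
        mul_lt_mul_of_pos_right (ten_mul_sq_mul_two_pow_mul_lt_two_pow hP hQ hxP) (by positivity)
    _ = 1 := mul_inv_cancel₀ (by positivity)
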